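/- Let G be an M-connected mixed direction-length graph. Then the rigidity matroid of G has an ear decomposition all of whose circuits are mixed circuits. -/

import Mathlib

open scoped Classical

noncomputable section

/-- A direction-length graph: a finite vertex set together with a set of
direction edges and a set of length edges, each an unordered pair of vertices.
(`true` marks direction edges, `false` marks length edges.) -/
structure DLGraph (V : Type) where
  verts : Finset V
  dir : Finset (Sym2 V)
  len : Finset (Sym2 V)

namespace DLGraph

variable {V : Type} [DecidableEq V]

/-- Well-formedness: loop-free and all endvertices belong to the vertex set. -/
def WellFormed (G : DLGraph V) : Prop :=
  (∀ e ∈ G.dir, ¬ e.IsDiag ∧ ∀ v ∈ e, v ∈ G.verts) ∧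
  (∀ e ∈ G.len, ¬ e.IsDiag ∧ ∀ v ∈ e, v ∈ G.verts)

/-- The edge set; `true` marks direction edges, `false` length edges. -/
def edges (G : DLGraph V) : Finset (Sym2 V × Bool) :=
  G.dir.image (fun s => (s, true)) ∪ G.len.image (fun s => (s, false))

def typeSet (G : DLGraph V) (t : Bool) : Finset (Sym2 V) := if t then G.dir else G.len

/-- A graph is mixed if it has both a direction and a length edge. -/
def Mixed (G : DLGraph V) : Prop := G.dir.Nonempty ∧ G.len.Nonempty

/-- A graph is pure if all its edges are of one type. -/
def Pure (G : DLGraph V) : Prop := G.dir = ∅ ∨ G.len = ∅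

/-- Pure of a given type: no edges of the opposite type. -/
def PureOfType (G : DLGraph V) (t : Bool) : Prop := (if t then G.len else G.dir) = ∅

/-- An edge set is mixed if it contains edges of both types. -/
def MixedEdgeSet (C : Finset (Sym2 V × Bool)) : Prop :=
  (∃ e ∈ C, e.2 = true) ∧ (∃ e ∈ C, e.2 = false)

/-- `p u - p v`, rotated by 90 degrees for direction edges. -/
def dvec (p : V → ℝ × ℝ) (t : Bool) (u v : V) : ℝ × ℝ :=
  if t then ((p u - p v).2, -((p u - p v).1)) else p u - p v

/-- The row of the rigidity matrix corresponding to an edge, viewed as a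
vector in `V → ℝ × ℝ`. -/
def edgeRow (p : V → ℝ × ℝ) (e : Sym2 V × Bool) : V → ℝ × ℝ :=
  Sym2.lift
    ⟨fun u v w =>
      (if w = u then dvec p e.2 u v else 0) + (if w = v then dvec p e.2 v u else 0),
      fun u v => funext fun w => add_comm _ _⟩ e.1

/-- A realisation is generic if the coordinates of the vertices of `G` are
algebraically independent over `ℚ`. -/
def Generic (G : DLGraph V) (p : V → ℝ × ℝ) : Prop :=
  AlgebraicIndependent ℚ
    (fun x : {v // v ∈ G.verts} × Bool => if x.2 then (p x.1.1).1 else (p x.1.1).2)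

/-- A set of edges is independent if its rigidity-matrix rows are linearly
independent for every generic realisation. -/
def Indep (G : DLGraph V) (S : Finset (Sym2 V × Bool)) : Prop :=
  ∀ p : V → ℝ × ℝ, G.Generic p →
    LinearIndependent ℝ (fun e : {e // e ∈ S} => edgeRow p e.1)

/-- A circuit of the rigidity matroid of `G`: a dependent edge set all of whose
proper subsets are independent. -/
def IsCircuit (G : DLGraph V) (C : Finset (Sym2 V × Bool)) : Prop :=
  C ⊆ G.edges ∧ ¬ G.Indep C ∧ ∀ C' ⊂ C, G.Indep C'

/-- `G` is M-connected: it has at least two edges and every pair of distinct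
edges lies in a common circuit of the rigidity matroid. -/
def MConnected (G : DLGraph V) : Prop :=
  2 ≤ G.edges.card ∧
  ∀ e ∈ G.edges, ∀ f ∈ G.edges, e ≠ f → ∃ C, G.IsCircuit C ∧ e ∈ C ∧ f ∈ C

/-- The rank of the rigidity matrix of `(G, p)`. -/
noncomputable def rank (G : DLGraph V) (p : V → ℝ × ℝ) : ℕ :=
  Module.finrank ℝ
    (Submodule.span ℝ (Set.range (fun e : {e // e ∈ G.edges} => edgeRow p e.1)))

/-- `G` is rigid if its rigidity matrix has rank `2|V| - 2` for every generic
realisation. -/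
def Rigid (G : DLGraph V) : Prop :=
  ∀ p : V → ℝ × ℝ, G.Generic p → G.rank p = 2 * G.verts.card - 2

def deleteEdge (G : DLGraph V) (e : Sym2 V × Bool) : DLGraph V :=
  ⟨G.verts, if e.2 then G.dir.erase e.1 else G.dir,
    if e.2 then G.len else G.len.erase e.1⟩

/-- `G` is redundantly rigid if `G - e` is rigid for every edge `e`. -/
def RedundantlyRigid (G : DLGraph V) : Prop := ∀ e ∈ G.edges, (G.deleteEdge e).Rigid

def addEdge (G : DLGraph V) (e : Sym2 V) (t : Bool) : DLGraph V :=
  ⟨G.verts, if t then insert e G.dir else G.dir, if t then G.len else insert e G.len⟩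

def addVert (G : DLGraph V) (v : V) : DLGraph V := ⟨insert v G.verts, G.dir, G.len⟩

def union (G H : DLGraph V) : DLGraph V :=
  ⟨G.verts ∪ H.verts, G.dir ∪ H.dir, G.len ∪ H.len⟩

/-- Adjacency: two distinct vertices joined by an edge of either type. -/
def Adj (G : DLGraph V) (u v : V) : Prop :=
  u ≠ v ∧ (s(u, v) ∈ G.dir ∨ s(u, v) ∈ G.len)

/-- `G` is connected: any two of its vertices are joined by a walk. -/
def Connected (G : DLGraph V) : Prop :=
  ∀ u ∈ G.verts, ∀ v ∈ G.verts, Relation.ReflTransGen G.Adj u v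

def deleteVerts (G : DLGraph V) (X : Finset V) : DLGraph V :=
  ⟨G.verts \ X, G.dir.filter (fun e => ∀ v ∈ e, v ∉ X),
    G.len.filter (fun e => ∀ v ∈ e, v ∉ X)⟩

/-- `G` is k-connected: more than `k` vertices, and removing fewer than `k`
vertices always leaves a connected graph. -/
def KConnected (k : ℕ) (G : DLGraph V) : Prop :=
  k < G.verts.card ∧ ∀ X : Finset V, X.card < k → (G.deleteVerts X).Connected

def inducedSubgraph (G : DLGraph V) (X : Finset V) : DLGraph V :=
  ⟨G.verts ∩ X, G.dir.filter (fun e => ∀ v ∈ e, v ∈ X),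
    G.len.filter (fun e => ∀ v ∈ e, v ∈ X)⟩

/-- Edges of a given type incident with a vertex. -/
def incident (G : DLGraph V) (t : Bool) (v : V) : Finset (Sym2 V) :=
  (G.typeSet t).filter (fun e => v ∈ e)

def degree (G : DLGraph V) (v : V) : ℕ :=
  (G.incident true v).card + (G.incident false v).card

/-- A node is a vertex of degree three. -/
def IsNode (G : DLGraph V) (v : V) : Prop := v ∈ G.verts ∧ G.degree v = 3

def nodeSet (G : DLGraph V) : Finset V := G.verts.filter (fun v => G.degree v = 3)

/-- A series node: a node of degree exactly two in the node subgraph. -/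
def SeriesNode (G : DLGraph V) (v : V) : Prop :=
  G.IsNode v ∧ (G.inducedSubgraph G.nodeSet).degree v = 2

/-- A leaf node: a node of degree at most one in the node subgraph. -/
def LeafNode (G : DLGraph V) (v : V) : Prop :=
  G.IsNode v ∧ (G.inducedSubgraph G.nodeSet).degree v ≤ 1

/-- The neighbourhood of a vertex. -/
def nbrs (G : DLGraph V) (v : V) : Finset V := G.verts.filter (fun u => G.Adj u v)

/-- The edges induced by a vertex set. -/
def inducedEdges (G : DLGraph V) (X : Finset V) : Finset (Sym2 V × Bool) :=
  G.edges.filter (fun e => ∀ v ∈ e.1, v ∈ X)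

def inducedOfType (G : DLGraph V) (t : Bool) (X : Finset V) : Finset (Sym2 V) :=
  (G.typeSet t).filter (fun e => ∀ v ∈ e, v ∈ X)

/-- `X` is mixed critical: it induces an independent edge set with
`i(X) = 2|X| - 2`. -/
def MixedCritical (G : DLGraph V) (X : Finset V) : Prop :=
  2 ≤ X.card ∧ X ⊆ G.verts ∧ G.Indep (G.inducedEdges X) ∧
  (G.inducedEdges X).card = 2 * X.card - 2

/-- `X` is direction critical: independent, `i(X) = 2|X| - 3`, no induced
length edges. -/
def DirCritical (G : DLGraph V) (X : Finset V) : Prop :=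
  2 ≤ X.card ∧ X ⊆ G.verts ∧ G.Indep (G.inducedEdges X) ∧
  (G.inducedEdges X).card = 2 * X.card - 3 ∧ G.inducedOfType false X = ∅

/-- `X` is length critical: independent, `i(X) = 2|X| - 3`, no induced
direction edges. -/
def LenCritical (G : DLGraph V) (X : Finset V) : Prop :=
  2 ≤ X.card ∧ X ⊆ G.verts ∧ G.Indep (G.inducedEdges X) ∧
  (G.inducedEdges X).card = 2 * X.card - 3 ∧ G.inducedOfType true X = ∅

def PureCriticalOfType (G : DLGraph V) (t : Bool) (X : Finset V) : Prop :=
  if t then G.DirCritical X else G.LenCritical X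

/-- `G` is a mixed circuit. -/
def IsMixedCircuitGraph (G : DLGraph V) : Prop := G.Mixed ∧ G.IsCircuit G.edges

/-- The 1-reduction of `G` at `v` onto the edge `e` of type `t`. -/
def oneReduce (G : DLGraph V) (v : V) (e : Sym2 V) (t : Bool) : DLGraph V :=
  ⟨G.verts.erase v,
    if t then insert e (G.dir.filter (fun f => v ∉ f)) else G.dir.filter (fun f => v ∉ f),
    if t then G.len.filter (fun f => v ∉ f) else insert e (G.len.filter (fun f => v ∉ f))⟩

/-- Legality of a 1-reduction at a node `v` onto neighbours `x, y`, adding a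
new edge of type `t` (required to match `v`'s type when `v` is pure). -/
def OneReduction (G : DLGraph V) (v x y : V) (t : Bool) : Prop :=
  G.IsNode v ∧ x ∈ G.nbrs v ∧ y ∈ G.nbrs v ∧ x ≠ y ∧
  (G.incident false v = ∅ → t = true) ∧
  (G.incident true v = ∅ → t = false) ∧
  s(x, y) ∉ G.typeSet t

/-- For a mixed circuit: a node is admissible if some 1-reduction at it yields
a mixed circuit. -/
def AdmissibleNodeC (G : DLGraph V) (v : V) : Prop :=
  ∃ (x y : V) (t : Bool), G.OneReduction v x y t ∧
    IsMixedCircuitGraph (G.oneReduce v s(x, y) t)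

/-- For an M-connected mixed graph: a node is admissible if some 1-reduction
at it yields a mixed M-connected graph. -/
def AdmissibleNodeM (G : DLGraph V) (v : V) : Prop :=
  ∃ (x y : V) (t : Bool), G.OneReduction v x y t ∧
    (G.oneReduce v s(x, y) t).Mixed ∧ (G.oneReduce v s(x, y) t).MConnected

/-- An edge is admissible if deleting it leaves an M-connected graph. -/
def AdmissibleEdgeM (G : DLGraph V) (e : Sym2 V × Bool) : Prop :=
  e ∈ G.edges ∧ (G.deleteEdge e).MConnected

/-- `(H1, H2)` is a 2-separation of `G`. -/
def Is2Sep (G H1 H2 : DLGraph V) : Prop :=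
  H1.union H2 = G ∧ 3 ≤ H1.verts.card ∧ 3 ≤ H2.verts.card ∧
  (H1.verts ∩ H2.verts).card = 2

def EdgeDisjoint2Sep (G H1 H2 : DLGraph V) : Prop :=
  G.Is2Sep H1 H2 ∧ H1.dir ∩ H2.dir = ∅ ∧ H1.len ∩ H2.len = ∅

/-- A 2-separation is direction-balanced if both sides contain a direction
edge not induced by the 2-vertex-cut. -/
def SepDirBalanced (H1 H2 : DLGraph V) : Prop :=
  (∃ e ∈ H1.dir, ¬ ∀ v ∈ e, v ∈ H1.verts ∩ H2.verts) ∧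
  (∃ e ∈ H2.dir, ¬ ∀ v ∈ e, v ∈ H1.verts ∩ H2.verts)

/-- `G` is direction-balanced if all its 2-separations are. -/
def DirBalanced (G : DLGraph V) : Prop :=
  ∀ H1 H2 : DLGraph V, G.Is2Sep H1 H2 → SepDirBalanced H1 H2

def twoSumGraph (G1 G2 : DLGraph V) (e : Sym2 V) (t : Bool) : DLGraph V :=
  ⟨G1.verts ∪ G2.verts,
    if t then (G1.dir ∪ G2.dir).erase e else G1.dir ∪ G2.dir,
    if t then G1.len ∪ G2.len else (G1.len ∪ G2.len).erase e⟩

/-- `G` is the 2-sum of `G1` with the pure graph `G2`. -/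
def IsTwoSum (G G1 G2 : DLGraph V) : Prop :=
  ∃ (x y : V) (t : Bool), x ≠ y ∧ G1.verts ∩ G2.verts = {x, y} ∧
    G2.PureOfType t ∧ s(x, y) ∈ G1.typeSet t ∧ s(x, y) ∈ G2.typeSet t ∧
    G = twoSumGraph G1 G2 s(x, y) t

/-- All unordered pairs of distinct vertices of `X`. -/
def completeOn (X : Finset V) : Finset (Sym2 V) :=
  ((X ×ˢ X).image (fun p => s(p.1, p.2))).filter (fun e => ¬ e.IsDiag)

def IsDirPureK4 (H : DLGraph V) : Prop :=
  H.verts.card = 4 ∧ H.len = ∅ ∧ H.dir = completeOn H.verts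

def IsLenPureK4 (H : DLGraph V) : Prop :=
  H.verts.card = 4 ∧ H.dir = ∅ ∧ H.len = completeOn H.verts

def IsPureK4 (H : DLGraph V) : Prop := IsDirPureK4 H ∨ IsLenPureK4 H

/-- `K3+`: a length triangle plus two direction edges. -/
def IsK3Plus (H : DLGraph V) : Prop :=
  ∃ a b c : V, a ≠ b ∧ a ≠ c ∧ b ≠ c ∧ H.verts = {a, b, c} ∧
    H.len = {s(a, b), s(a, c), s(b, c)} ∧ H.dir = {s(a, b), s(b, c)}

/-- `K3-`: a direction triangle plus two length edges. -/
def IsK3Minus (H : DLGraph V) : Prop :=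
  ∃ a b c : V, a ≠ b ∧ a ≠ c ∧ b ≠ c ∧ H.verts = {a, b, c} ∧
    H.dir = {s(a, b), s(a, c), s(b, c)} ∧ H.len = {s(a, b), s(b, c)}

/-- Edge addition: a new edge between vertices of `G` not already joined by an
edge of that type. -/
def IsEdgeAddition (G G' : DLGraph V) : Prop :=
  ∃ (e : Sym2 V) (t : Bool), ¬ e.IsDiag ∧ (∀ v ∈ e, v ∈ G.verts) ∧
    e ∉ G.typeSet t ∧ G' = G.addEdge e t

/-- 1-extension: delete an edge `xy` of type `t` and add a new vertex `v`
joined to `x`, `y` and some `z`, with at least one new edge of type `t`. -/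
def IsOneExtension (G G' : DLGraph V) : Prop :=
  ∃ (x y z v : V) (t t1 t2 t3 : Bool),
    x ≠ y ∧ x ∈ G.verts ∧ y ∈ G.verts ∧ z ∈ G.verts ∧ v ∉ G.verts ∧
    s(x, y) ∈ G.typeSet t ∧
    (z = x → t3 ≠ t1) ∧ (z = y → t3 ≠ t2) ∧
    (t1 = t ∨ t2 = t ∨ t3 = t) ∧
    G' = ((((G.deleteEdge (s(x, y), t)).addVert v).addEdge s(v, x) t1).addEdge
            s(v, y) t2).addEdge s(v, z) t3

/-- One construction step: an edge addition, a 1-extension, or a 2-sum of the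
current graph with a graph satisfying `K4Pred`. -/
def ConstructionStep (K4Pred : DLGraph V → Prop) (H H' : DLGraph V) : Prop :=
  IsEdgeAddition H H' ∨ IsOneExtension H H' ∨
  ∃ K : DLGraph V, K4Pred K ∧ IsTwoSum H' H K

/-- `G` can be obtained from `K3+` or `K3-` by a sequence of construction
steps. -/
def Constructible (K4Pred : DLGraph V → Prop) (G : DLGraph V) : Prop :=
  ∃ H0 : DLGraph V, (IsK3Plus H0 ∨ IsK3Minus H0) ∧
    Relation.ReflTransGen (ConstructionStep K4Pred) H0 G

/-- The union `C1 ∪ ... ∪ Ci` (first `i` members of the sequence). -/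
def partialUnion {m : ℕ} (Cs : Fin m → Finset (Sym2 V × Bool)) (i : ℕ) :
    Finset (Sym2 V × Bool) :=
  (Finset.univ.filter (fun j : Fin m => (j : ℕ) < i)).biUnion Cs

/-- An ear decomposition of the rigidity matroid of `G`. -/
def IsEarDecomposition (G : DLGraph V) {m : ℕ}
    (Cs : Fin m → Finset (Sym2 V × Bool)) : Prop :=
  1 ≤ m ∧ (∀ i, G.IsCircuit (Cs i)) ∧ partialUnion Cs m = G.edges ∧
  ∀ i : Fin m, 1 ≤ (i : ℕ) →
    (Cs i ∩ partialUnion Cs i).Nonempty ∧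
    (Cs i \ partialUnion Cs i).Nonempty ∧
    ∀ C', G.IsCircuit C' → (C' ∩ partialUnion Cs i).Nonempty →
      (C' \ partialUnion Cs i).Nonempty →
      ¬ (C' \ partialUnion Cs i) ⊂ (Cs i \ partialUnion Cs i)

/-- The vertices of `G` covered by an edge set. -/
def supportIn (G : DLGraph V) (C : Finset (Sym2 V × Bool)) : Finset V :=
  G.verts.filter (fun v => ∃ e ∈ C, v ∈ e.1)

/-- The subgraph of `G` induced by an edge set. -/
def edgeInduced (G : DLGraph V) (C : Finset (Sym2 V × Bool)) : DLGraph V :=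
  ⟨G.supportIn C, (C.filter (fun e => e.2 = true)).image Prod.fst,
    (C.filter (fun e => e.2 = false)).image Prod.fst⟩

/-- Unordered pairs with one element in `A - B` and the other in `B - A`. -/
def crossPairs (A B : Finset V) : Finset (Sym2 V) :=
  ((A \ B) ×ˢ (B \ A)).image (fun p => s(p.1, p.2))

/-- `d(A,B)`: the number of edges with one endvertex in `A - B` and the other
in `B - A`. -/
def dCount (G : DLGraph V) (A B : Finset V) : ℕ :=
  (G.dir.filter (fun e => e ∈ crossPairs A B)).card +
  (G.len.filter (fun e => e ∈ crossPairs A B)).card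

/-- Remove from `H` all edges induced by the vertex set `R`. -/
def removeInducedEdges (H : DLGraph V) (R : Finset V) : DLGraph V :=
  ⟨H.verts, H.dir.filter (fun e => ¬ ∀ v ∈ e, v ∈ R),
    H.len.filter (fun e => ¬ ∀ v ∈ e, v ∈ R)⟩

/-- Equivalent frameworks: same length of each length edge, and parallel
difference vectors along each direction edge. -/
def Equivalent (G : DLGraph V) (p q : V → ℝ × ℝ) : Prop :=
  (∀ e ∈ G.len, ∀ u v : V, e = s(u, v) →
    ((q u - q v).1) ^ 2 + ((q u - q v).2) ^ 2 =
      ((p u - p v).1) ^ 2 + ((p u - p v).2) ^ 2) ∧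
  (∀ e ∈ G.dir, ∀ u v : V, e = s(u, v) →
    (q u - q v).1 * (p u - p v).2 = (q u - q v).2 * (p u - p v).1)

/-- Congruent frameworks: `q` is obtained from `p` by a translation, possibly
composed with the point reflection `x ↦ -x`. -/
def Congruent (G : DLGraph V) (p q : V → ℝ × ℝ) : Prop :=
  ∃ c : ℝ × ℝ, (∀ v ∈ G.verts, q v = p v + c) ∨ (∀ v ∈ G.verts, q v = -(p v) + c)

/-- `(G, p)` is globally rigid. -/
def GloballyRigidAt (G : DLGraph V) (p : V → ℝ × ℝ) : Prop :=
  ∀ q : V → ℝ × ℝ, G.Equivalent p q → G.Congruent p q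

/-- `G` is globally rigid: every generic realisation is globally rigid. -/
def GloballyRigid (G : DLGraph V) : Prop :=
  ∀ p : V → ℝ × ℝ, G.Generic p → G.GloballyRigidAt p

/-- A feasible edge: admissible, and its deletion is direction-balanced. -/
def FeasibleEdge (G : DLGraph V) (e : Sym2 V × Bool) : Prop :=
  G.AdmissibleEdgeM e ∧ (G.deleteEdge e).DirBalanced

/-- A feasible node: it has an admissible 1-reduction whose result is
direction-balanced. -/
def FeasibleNode (G : DLGraph V) (v : V) : Prop :=
  ∃ (x y : V) (t : Bool), G.OneReduction v x y t ∧
    (G.oneReduce v s(x, y) t).Mixed ∧ (G.oneReduce v s(x, y) t).MConnected ∧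
    (G.oneReduce v s(x, y) t).DirBalanced

/-- `X` is a `w`-node-critical set: `w` is a node with neighbours `x, y, z`
where `{y, z} ⊆ X ⊆ V - {w, x}` and `d(x) ≥ 4`. -/
def VNodeCritical (G : DLGraph V) (w : V) (X : Finset V) : Prop :=
  G.IsNode w ∧
  ∃ x y z : V, x ≠ y ∧ x ≠ z ∧ y ≠ z ∧ G.nbrs w = {x, y, z} ∧
    y ∈ X ∧ z ∈ X ∧ X ⊆ G.verts ∧ w ∉ X ∧ x ∉ X ∧ 4 ≤ G.degree x

end DLGraph

end

/-!
Independence of edge rows does not depend on the generic realisation: the rows are given by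
polynomials over `ℚ` in the vertex coordinates, and evaluation at generic coordinates is an
injective ring homomorphism, so linear independence over `ℝ` is equivalent to linear independence
over the polynomial ring. Hence the rigidity matroid is the linear matroid of the rows at a single
generic realisation, and circuit elimination is available.

The ears are found greedily. Let `X` be the union of the ears so far; it is mixed, and any two of
its edges lie on a common circuit inside `X`. M-connectivity gives a circuit meeting both `X` and
its complement, hence an ear `K` over `X` with minimal new part `K \ X`. Pick `y ∈ K \ X`,
`x ∈ K ∩ X` and `z ∈ X` of the other type than `y`. Lying on a common circuit is transitive (by
strong circuit elimination), so a circuit inside `K ∪ X` contains `y` and `z`; its new part lies in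
`K \ X`, so it is again an ear, and it is mixed.
-/

open Set

section LinearMatroid

variable {α K W : Type*} [Field K] [AddCommGroup W] [Module K W]

theorem LinearIndepOn.exists_insert_of_encard_lt {v : α → W} {I J : Set α}
    (hI : LinearIndepOn K v I) (hJ : LinearIndepOn K v J) (hlt : I.encard < J.encard) :
    ∃ e ∈ J, e ∉ I ∧ LinearIndepOn K v (insert e I) := by
  by_contra! h
  have hspan : Submodule.span K (v '' J) ≤ Submodule.span K (v '' I) := by
    refine Submodule.span_le.2 ?_
    rintro _ ⟨e, heJ, rfl⟩
    by_cases heI : e ∈ I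
    · exact Submodule.subset_span (mem_image_of_mem v heI)
    · by_contra hsp
      exact h e heJ heI ((linearIndepOn_insert heI).2 ⟨hI, hsp⟩)
  refine hlt.not_ge ?_
  rw [← toENat_rank_span_set hI, ← toENat_rank_span_set hJ]
  exact OrderHomClass.mono Cardinal.toENat (Submodule.rank_mono hspan)

variable (K) in
def linearMatroid (E : Finset α) (v : α → W) : Matroid α :=
  (IndepMatroid.ofBddAugment (E : Set α) (fun I => I ⊆ E ∧ LinearIndepOn K v I)
    ⟨empty_subset _, linearIndepOn_empty K v⟩
    (fun _ _ hJ hIJ => ⟨hIJ.trans hJ.1, hJ.2.mono hIJ⟩)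
    (fun _ _ hI hJ hlt => by
      obtain ⟨e, heJ, heI, hi⟩ := hI.2.exists_insert_of_encard_lt hJ.2 hlt
      exact ⟨e, heJ, heI, insert_subset (hJ.1 heJ) hI.1, hi⟩)
    ⟨E.card, fun _ hI => (encard_le_encard hI.1).trans (encard_coe_eq_coe_finsetCard E).le⟩
    (fun _ hI => hI.1)).matroid

@[simp] theorem linearMatroid_E (E : Finset α) (v : α → W) :
    (linearMatroid K E v).E = E := rfl

@[simp] theorem linearMatroid_indep {E : Finset α} {v : α → W} {I : Set α} :
    (linearMatroid K E v).Indep I ↔ I ⊆ E ∧ LinearIndepOn K v I := Iff.rfl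

instance (E : Finset α) (v : α → W) : (linearMatroid K E v).RankFinite := by
  unfold linearMatroid; infer_instance

end LinearMatroid

namespace Matroid

variable {α β : Type*} {M : Matroid α} {C C₁ C₂ X : Set α} {e f g : α}

theorem IsCircuit.exists_isCircuit_of_common_mem [M.Finitary] (hC₁ : M.IsCircuit C₁)
    (hC₂ : M.IsCircuit C₂) (he : e ∈ C₁) (hf₁ : f ∈ C₁) (hf₂ : f ∈ C₂) (hg : g ∈ C₂) :
    ∃ C ⊆ C₁ ∪ C₂, M.IsCircuit C ∧ e ∈ C ∧ g ∈ C := by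
  induction hn : (C₁ ∪ C₂).ncard using Nat.strong_induction_on generalizing C₂ f g with
  | _ n ih =>
  by_cases hgC₁ : g ∈ C₁
  · exact ⟨C₁, subset_union_left, hC₁, he, hgC₁⟩
  by_cases heC₂ : e ∈ C₂
  · exact ⟨C₂, subset_union_right, hC₂, heC₂, hg⟩
  obtain ⟨C₃, hC₃ss, hC₃, heC₃⟩ := hC₁.strong_elimination hC₂ hf₁ hf₂ he heC₂
  by_cases hgC₃ : g ∈ C₃
  · exact ⟨C₃, hC₃ss.trans sdiff_subset, hC₃, heC₃, hgC₃⟩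
  -- `C₃` avoids `f ∈ C₁`, so it is not contained in `C₁`
  obtain ⟨d, hdC₃, hdC₁⟩ : ∃ d ∈ C₃, d ∉ C₁ := not_subset.1 fun hss =>
    (hC₃ss (hC₃.eq_of_subset_isCircuit hC₁ hss ▸ hf₁)).2 rfl
  have hdC₂ : d ∈ C₂ := (hC₃ss hdC₃).1.resolve_left hdC₁
  obtain ⟨C₄, hC₄ss, hC₄, hgC₄⟩ := hC₂.strong_elimination hC₃ hdC₂ hdC₃ hg hgC₃
  have hC₄U : C₄ ⊆ (C₁ ∪ C₂) \ {d} := fun x hx =>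
    ⟨(hC₄ss hx).1.elim Or.inr fun hx₃ => (hC₃ss hx₃).1, (hC₄ss hx).2⟩
  by_cases heC₄ : e ∈ C₄
  · exact ⟨C₄, hC₄U.trans sdiff_subset, hC₄, heC₄, hgC₄⟩
  -- `C₄` avoids `d ∈ C₂`, so it meets `C₁`
  obtain ⟨x, hxC₄, hxC₁⟩ : ∃ x ∈ C₄, x ∈ C₁ := by
    by_contra! hdisj
    have hss : C₄ ⊆ C₂ := fun x hx => (hC₄U hx).1.resolve_left (hdisj x hx)
    exact (hC₄ss (hC₄.eq_of_subset_isCircuit hC₂ hss ▸ hdC₂)).2 rfl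
  have hC₁₄ : C₁ ∪ C₄ ⊆ (C₁ ∪ C₂) \ {d} :=
    union_subset (subset_sdiff_singleton subset_union_left hdC₁) hC₄U
  have hlt : (C₁ ∪ C₄).ncard < n := hn ▸ ncard_lt_ncard
    (hC₁₄.trans_ssubset (sdiff_singleton_ssubset.2 (Or.inr hdC₂))) (hC₁.finite.union hC₂.finite)
  obtain ⟨C, hCss, hC, heC, hgC⟩ := ih _ hlt hC₄ hxC₁ hxC₄ hgC₄ rfl
  exact ⟨C, hCss.trans (hC₁₄.trans sdiff_subset), hC, heC, hgC⟩

def CircuitConnectedOn (M : Matroid α) (X : Set α) : Prop :=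
  ∀ e ∈ X, ∀ f ∈ X, ∃ C ⊆ X, M.IsCircuit C ∧ e ∈ C ∧ f ∈ C

theorem IsCircuit.circuitConnectedOn (hC : M.IsCircuit C) : M.CircuitConnectedOn C :=
  fun _ he _ hf => ⟨C, subset_rfl, hC, he, hf⟩

theorem CircuitConnectedOn.union_of_isCircuit [M.Finitary] (hX : M.CircuitConnectedOn X)
    (hC : M.IsCircuit C) (hCX : (C ∩ X).Nonempty) : M.CircuitConnectedOn (X ∪ C) := by
  obtain ⟨x, hxC, hxX⟩ := hCX
  have hx : ∀ e ∈ X ∪ C, ∃ D ⊆ X ∪ C, M.IsCircuit D ∧ e ∈ D ∧ x ∈ D := by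
    rintro e (heX | heC)
    · obtain ⟨D, hDX, hD, heD, hxD⟩ := hX e heX x hxX
      exact ⟨D, hDX.trans subset_union_left, hD, heD, hxD⟩
    · exact ⟨C, subset_union_right, hC, heC, hxC⟩
  intro e he f hf
  obtain ⟨D₁, hD₁, hD₁c, heD₁, hxD₁⟩ := hx e he
  obtain ⟨D₂, hD₂, hD₂c, hfD₂, hxD₂⟩ := hx f hf
  obtain ⟨D, hD, hDc, heD, hfD⟩ :=
    hD₁c.exists_isCircuit_of_common_mem hD₂c heD₁ hxD₁ hxD₂ hfD₂
  exact ⟨D, hD.trans (union_subset hD₁ hD₂), hDc, heD, hfD⟩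

/-- Conditions (E1)–(E3) of an ear decomposition, with `X` the union of the earlier circuits. -/
def IsEar (M : Matroid α) (X C : Set α) : Prop :=
  M.IsCircuit C ∧ (C ∩ X).Nonempty ∧ (C \ X).Nonempty ∧
    ∀ C', M.IsCircuit C' → (C' ∩ X).Nonempty → (C' \ X).Nonempty → ¬ C' \ X ⊂ C \ X

theorem IsCircuit.exists_isEar [M.Finitary] (hC : M.IsCircuit C) (hCX : (C ∩ X).Nonempty)
    (hCX' : (C \ X).Nonempty) : ∃ K, M.IsEar X K := by
  obtain ⟨K, ⟨hK, hKX, hKX'⟩, hmin⟩ := (measure fun K : Set α => (K \ X).ncard).wf.has_min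
    {K | M.IsCircuit K ∧ (K ∩ X).Nonempty ∧ (K \ X).Nonempty} ⟨C, hC, hCX, hCX'⟩
  exact ⟨K, hK, hKX, hKX', fun C' hC' h₁ h₂ hss =>
    hmin C' ⟨hC', h₁, h₂⟩ (ncard_lt_ncard hss hK.finite.sdiff)⟩

theorem CircuitConnectedOn.exists_isEar_bichromatic [M.Finitary] {c : α → β} {a b : α}
    (hX : M.CircuitConnectedOn X) (ha : a ∈ X) (hb : b ∈ X) (hab : c a ≠ c b)
    (hC : M.IsCircuit C) (hCX : (C ∩ X).Nonempty) (hCX' : (C \ X).Nonempty) :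
    ∃ K, M.IsEar X K ∧ ∃ e ∈ K, ∃ f ∈ K, c e ≠ c f := by
  obtain ⟨K, hK, ⟨x, hxK, hxX⟩, ⟨y, hyK, hyX⟩, hKmin⟩ := hC.exists_isEar hCX hCX'
  obtain ⟨z, hzX, hyz⟩ : ∃ z ∈ X, c y ≠ c z := by
    by_cases hay : c y = c a
    · exact ⟨b, hb, hay ▸ hab⟩
    · exact ⟨a, ha, hay⟩
  obtain ⟨D, hDX, hD, hxD, hzD⟩ := hX x hxX z hzX
  obtain ⟨K', hK'ss, hK', hyK', hzK'⟩ := hK.exists_isCircuit_of_common_mem hD hyK hxK hxD hzD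
  have hK'X : K' \ X ⊆ K \ X := fun w hw =>
    ⟨(hK'ss hw.1).resolve_right fun hwD => hw.2 (hDX hwD), hw.2⟩
  exact ⟨K', ⟨hK', ⟨z, hzK', hzX⟩, ⟨y, hyK', hyX⟩, fun C' hC' h₁ h₂ hss =>
    hKmin C' hC' h₁ h₂ (hss.trans_subset hK'X)⟩, y, hyK', z, hzK', hyz⟩

end Matroid

namespace DLGraph

variable {V : Type}

theorem mixedEdgeSet_of_snd_ne {C : Finset (Sym2 V × Bool)} {e f : Sym2 V × Bool}
    (he : e ∈ C) (hf : f ∈ C) (hef : e.2 ≠ f.2) : MixedEdgeSet C := by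
  cases h : e.2
  · exact ⟨⟨f, hf, by simpa [h] using hef.symm⟩, ⟨e, he, h⟩⟩
  · exact ⟨⟨e, he, h⟩, ⟨f, hf, by simpa [h] using hef.symm⟩⟩

variable [DecidableEq V]

def vertexCoords (G : DLGraph V) : (V → ℝ × ℝ) →ₗ[ℝ] ({v // v ∈ G.verts} × Bool → ℝ) where
  toFun f x := if x.2 then (f x.1).1 else (f x.1).2
  map_add' f g := by ext x; by_cases h : x.2 <;> simp [h]
  map_smul' c f := by ext x; by_cases h : x.2 <;> simp [h]

variable {G : DLGraph V}

theorem edgeRow_mk (p : V → ℝ × ℝ) (u v : V) (t : Bool) (w : V) :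
    edgeRow p (s(u, v), t) w =
      ((if w = u then 1 else 0) - (if w = v then 1 else 0) : ℝ) • dvec p t u v := by
  simp only [edgeRow, dvec, Sym2.lift_mk]
  split_ifs <;> ext <;> simp

theorem WellFormed.exists_of_mem_edges (hG : G.WellFormed) {e : Sym2 V × Bool}
    (he : e ∈ G.edges) : ∃ u ∈ G.verts, ∃ v ∈ G.verts, e = (s(u, v), e.2) := by
  obtain ⟨⟨u, v⟩, t⟩ := e
  have hverts : ∀ w ∈ s(u, v), w ∈ G.verts := by
    simp only [edges, Finset.mem_union, Finset.mem_image, Prod.mk.injEq] at he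
    rcases he with ⟨_, h, rfl, -⟩ | ⟨_, h, rfl, -⟩
    exacts [(hG.1 _ h).2, (hG.2 _ h).2]
  exact ⟨u, hverts u (by simp), v, hverts v (by simp), rfl⟩

theorem edgeRow_mem_pi (hG : G.WellFormed) (p : V → ℝ × ℝ) {e : Sym2 V × Bool}
    (he : e ∈ G.edges) : edgeRow p e ∈ Submodule.pi (R := ℝ) (↑G.verts)ᶜ fun _ => ⊥ := by
  obtain ⟨u, hu, v, hv, he⟩ := hG.exists_of_mem_edges he
  rw [he, Submodule.mem_pi]
  intro w hw
  rw [edgeRow_mk, if_neg (by rintro rfl; exact hw hu), if_neg (by rintro rfl; exact hw hv)]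
  simp

theorem disjoint_span_edgeRow_ker_vertexCoords (hG : G.WellFormed) (p : V → ℝ × ℝ)
    {S : Finset (Sym2 V × Bool)} (hS : S ⊆ G.edges) :
    Disjoint (Submodule.span ℝ (range fun e : S => edgeRow p e))
      (LinearMap.ker G.vertexCoords) := by
  rw [Submodule.disjoint_def]
  intro f hf hker
  have hf : f ∈ Submodule.pi (R := ℝ) (↑G.verts)ᶜ fun _ => ⊥ :=
    Submodule.span_le.2 (range_subset_iff.2 fun e => edgeRow_mem_pi hG p (hS e.2)) hf
  ext w : 1
  by_cases hw : w ∈ G.verts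
  · have h₁ := congrFun hker (⟨w, hw⟩, true)
    have h₂ := congrFun hker (⟨w, hw⟩, false)
    simp only [vertexCoords] at h₁ h₂
    exact Prod.ext h₁ h₂
  · simpa using (Submodule.mem_pi.1 hf) w hw

open MvPolynomial in
theorem exists_mvPolynomial_vertexCoords_edgeRow (hG : G.WellFormed) {e : Sym2 V × Bool}
    (he : e ∈ G.edges) :
    ∃ Q : {v // v ∈ G.verts} × Bool → MvPolynomial ({v // v ∈ G.verts} × Bool) ℚ,
      ∀ p x, aeval (G.vertexCoords p) (Q x) = G.vertexCoords (edgeRow p e) x := by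
  obtain ⟨u, hu, v, hv, he⟩ := hG.exists_of_mem_edges he
  obtain ⟨s, t⟩ := e
  cases he
  let Xu c : MvPolynomial ({v // v ∈ G.verts} × Bool) ℚ := X (⟨u, hu⟩, c)
  let Xv c : MvPolynomial ({v // v ∈ G.verts} × Bool) ℚ := X (⟨v, hv⟩, c)
  -- by `edgeRow_mk`, the entry at `(w, c)` is `δ_wu - δ_wv` times coordinate `c` of `dvec p t u v`
  refine ⟨fun x => ((if (x.1 : V) = u then 1 else 0) - (if (x.1 : V) = v then 1 else 0)) *
    (if t then (if x.2 then Xu false - Xv false else Xv true - Xu true) else Xu x.2 - Xv x.2),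
    fun p ⟨⟨w, hw⟩, c⟩ => ?_⟩
  simp only [vertexCoords, LinearMap.coe_mk, AddHom.coe_mk, edgeRow_mk, dvec, Xu, Xv]
  cases t <;> cases c <;> by_cases hwu : w = u <;> by_cases hwv : w = v <;> simp [hwu, hwv]

open MvPolynomial in
theorem linearIndependent_edgeRow_iff_mvPolynomial (hG : G.WellFormed)
    {S : Finset (Sym2 V × Bool)} (hS : S ⊆ G.edges)
    {Q : S → {v // v ∈ G.verts} × Bool → MvPolynomial ({v // v ∈ G.verts} × Bool) ℚ}
    (hQ : ∀ e p x, aeval (G.vertexCoords p) (Q e x) = G.vertexCoords (edgeRow p e) x)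
    {p : V → ℝ × ℝ} (hp : G.Generic p) :
    LinearIndependent ℝ (fun e : S => edgeRow p e) ↔
      LinearIndependent (MvPolynomial ({v // v ∈ G.verts} × Bool) ℚ) Q := by
  let _ : Algebra (MvPolynomial ({v // v ∈ G.verts} × Bool) ℚ) ℝ :=
    (aeval (G.vertexCoords p)).toRingHom.toAlgebra
  have : FaithfulSMul (MvPolynomial ({v // v ∈ G.verts} × Bool) ℚ) ℝ :=
    (faithfulSMul_iff_algebraMap_injective _ _).2 hp
  rw [← linearIndependent_algebraMap_comp_iff (S := ℝ),
    ← G.vertexCoords.linearIndependent_iff_of_disjoint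
      (disjoint_span_edgeRow_ker_vertexCoords hG p hS)]
  congr! with e
  ext x
  exact (hQ e p x).symm

theorem linearIndependent_edgeRow_iff_of_generic (hG : G.WellFormed)
    {S : Finset (Sym2 V × Bool)} (hS : S ⊆ G.edges) {p q : V → ℝ × ℝ}
    (hp : G.Generic p) (hq : G.Generic q) :
    LinearIndependent ℝ (fun e : S => edgeRow p e) ↔
      LinearIndependent ℝ (fun e : S => edgeRow q e) := by
  choose Q hQ using fun e : S => exists_mvPolynomial_vertexCoords_edgeRow hG (hS e.2)
  rw [linearIndependent_edgeRow_iff_mvPolynomial hG hS hQ hp,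
    linearIndependent_edgeRow_iff_mvPolynomial hG hS hQ hq]

theorem indep_iff_linearIndepOn (hG : G.WellFormed) {p : V → ℝ × ℝ} (hp : G.Generic p)
    {S : Finset (Sym2 V × Bool)} (hS : S ⊆ G.edges) :
    G.Indep S ↔ LinearIndepOn ℝ (edgeRow p) (S : Set (Sym2 V × Bool)) :=
  ⟨fun h => h p hp, fun h _ hq => (linearIndependent_edgeRow_iff_of_generic hG hS hp hq).1 h⟩

theorem isCircuit_iff_isCircuit_linearMatroid (hG : G.WellFormed) {p : V → ℝ × ℝ}
    (hp : G.Generic p) {C : Finset (Sym2 V × Bool)} :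
    G.IsCircuit C ↔ (linearMatroid ℝ G.edges (edgeRow p)).IsCircuit C := by
  have hind : ∀ S ⊆ G.edges, G.Indep S ↔ (linearMatroid ℝ G.edges (edgeRow p)).Indep S :=
    fun S hS => by rw [linearMatroid_indep, indep_iff_linearIndepOn hG hp hS]; simp [hS]
  rw [Matroid.isCircuit_iff_dep_forall_sdiff_singleton_indep, Matroid.Dep, linearMatroid_E,
    Finset.coe_subset]
  constructor
  · rintro ⟨hCE, hdep, hmin⟩
    refine ⟨⟨fun hi => hdep ((hind C hCE).2 hi), hCE⟩, fun e he => ?_⟩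
    rw [← Finset.coe_erase]
    exact (hind _ ((C.erase_subset e).trans hCE)).1 (hmin _ (Finset.erase_ssubset he))
  · rintro ⟨⟨hdep, hCE⟩, hmin⟩
    refine ⟨hCE, fun hi => hdep ((hind C hCE).1 hi), fun D hD => ?_⟩
    obtain ⟨e, heC, heD⟩ := Finset.exists_of_ssubset hD
    refine (hind D (hD.subset.trans hCE)).2 ((hmin e heC).subset fun x hx => ?_)
    exact ⟨hD.subset hx, fun hxe => heD (hxe ▸ hx)⟩

theorem MConnected.exists_generic (hMC : G.MConnected) : ∃ p, G.Generic p := by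
  obtain ⟨a, ha, b, hb, hab⟩ := Finset.one_lt_card.1 hMC.1
  obtain ⟨C, hC, -⟩ := hMC.2 a ha b hb hab
  by_contra! h
  exact hC.2.1 fun p hp => absurd hp (h p)

theorem MConnected.exists_isCircuit_mixedEdgeSet (hMC : G.MConnected) (hmix : G.Mixed) :
    ∃ C, G.IsCircuit C ∧ MixedEdgeSet C := by
  obtain ⟨⟨d, hd⟩, ⟨l, hl⟩⟩ := hmix
  obtain ⟨C, hC, hdC, hlC⟩ := hMC.2 (d, true) (by simp [edges, hd]) (l, false)
    (by simp [edges, hl]) (by simp)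
  exact ⟨C, hC, ⟨_, hdC, rfl⟩, ⟨_, hlC, rfl⟩⟩

section EarDecomposition

variable {m : ℕ} {Cs : Fin m → Finset (Sym2 V × Bool)}

theorem mem_partialUnion {i : ℕ} {x : Sym2 V × Bool} :
    x ∈ partialUnion Cs i ↔ ∃ j : Fin m, (j : ℕ) < i ∧ x ∈ Cs j := by
  simp [partialUnion]

theorem partialUnion_snoc_of_le (K : Finset (Sym2 V × Bool)) {i : ℕ} (hi : i ≤ m) :
    partialUnion (Fin.snoc Cs K : Fin (m + 1) → _) i = partialUnion Cs i := by
  ext x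
  simp only [mem_partialUnion, Fin.exists_fin_succ', Fin.snoc_castSucc, Fin.snoc_last,
    Fin.val_castSucc, Fin.val_last]
  exact or_iff_left fun h => absurd h.1 (by omega)

theorem partialUnion_snoc_last (K : Finset (Sym2 V × Bool)) :
    partialUnion (Fin.snoc Cs K : Fin (m + 1) → _) (m + 1) = partialUnion Cs m ∪ K := by
  ext x
  simp [mem_partialUnion, Fin.exists_fin_succ', Fin.is_lt]

def IsMixedEarPrefix (M : Matroid (Sym2 V × Bool)) (Cs : Fin m → Finset (Sym2 V × Bool)) :
    Prop :=
  1 ≤ m ∧ (∀ i, M.IsCircuit (Cs i) ∧ MixedEdgeSet (Cs i)) ∧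
    ∀ i : Fin m, 1 ≤ (i : ℕ) → M.IsEar (partialUnion Cs i) (Cs i)

theorem IsMixedEarPrefix.snoc {M : Matroid (Sym2 V × Bool)} (h : IsMixedEarPrefix M Cs)
    {K : Finset (Sym2 V × Bool)} (hK : M.IsEar (partialUnion Cs m) K) (hKmix : MixedEdgeSet K) :
    IsMixedEarPrefix M (Fin.snoc Cs K : Fin (m + 1) → _) := by
  refine ⟨by omega, fun i => ?_, fun i => ?_⟩
  · induction i using Fin.lastCases with
    | last => simpa using And.intro hK.1 hKmix
    | cast i => simpa using h.2.1 i
  · induction i using Fin.lastCases with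
    | last => simpa [partialUnion_snoc_of_le K le_rfl] using fun _ => hK
    | cast i => simpa [partialUnion_snoc_of_le K i.is_lt.le] using h.2.2 i

theorem IsMixedEarPrefix.isEarDecomposition {M : Matroid (Sym2 V × Bool)}
    (hM : ∀ C : Finset (Sym2 V × Bool), G.IsCircuit C ↔ M.IsCircuit C)
    (h : IsMixedEarPrefix M Cs) (hcover : partialUnion Cs m = G.edges) :
    G.IsEarDecomposition Cs ∧ ∀ i, MixedEdgeSet (Cs i) := by
  refine ⟨⟨h.1, fun i => (hM _).2 (h.2.1 i).1, hcover, fun i hi => ?_⟩, fun i => (h.2.1 i).2⟩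
  obtain ⟨-, h₁, h₂, h₃⟩ := h.2.2 i hi
  refine ⟨by exact_mod_cast h₁, by exact_mod_cast h₂, fun C' hC' h₁' h₂' hss =>
    h₃ C' ((hM C').1 hC') (by exact_mod_cast h₁') (by exact_mod_cast h₂') (by exact_mod_cast hss)⟩

theorem IsMixedEarPrefix.exists_isEarDecomposition {M : Matroid (Sym2 V × Bool)} [M.Finitary]
    (hMC : G.MConnected) (hM : ∀ C : Finset (Sym2 V × Bool), G.IsCircuit C ↔ M.IsCircuit C)
    (h : IsMixedEarPrefix M Cs) (hconn : M.CircuitConnectedOn (partialUnion Cs m)) :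
    ∃ (m' : ℕ) (Cs' : Fin m' → Finset (Sym2 V × Bool)),
      G.IsEarDecomposition Cs' ∧ ∀ i, MixedEdgeSet (Cs' i) := by
  induction hn : (G.edges \ partialUnion Cs m).card using Nat.strong_induction_on
    generalizing m Cs with
  | _ n ih =>
  have hU : partialUnion Cs m ⊆ G.edges :=
    Finset.biUnion_subset.2 fun i _ => ((hM _).2 (h.2.1 i).1).1
  by_cases hcover : partialUnion Cs m = G.edges
  · exact ⟨m, Cs, h.isEarDecomposition hM hcover⟩
  obtain ⟨f, hfE, hfU⟩ := Finset.exists_of_ssubset (hU.ssubset_of_ne hcover)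
  have hC₀U : Cs ⟨0, h.1⟩ ⊆ partialUnion Cs m := fun x hx =>
    mem_partialUnion.2 ⟨⟨0, h.1⟩, h.1, hx⟩
  obtain ⟨⟨a, haC₀, ha⟩, ⟨b, hbC₀, hb⟩⟩ := (h.2.1 ⟨0, h.1⟩).2
  obtain ⟨C, hC, hfC, haC⟩ := hMC.2 f hfE a (hU (hC₀U haC₀)) fun hfa => hfU (hfa ▸ hC₀U haC₀)
  obtain ⟨K, hK, e, heK, e', he'K, hee'⟩ := hconn.exists_isEar_bichromatic (c := Prod.snd)
    (hC₀U haC₀) (hC₀U hbC₀) (by rw [ha, hb]; decide) ((hM C).1 hC) ⟨a, haC, hC₀U haC₀⟩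
    ⟨f, hfC, hfU⟩
  obtain ⟨K, rfl⟩ := hK.1.finite.exists_finset_coe
  obtain ⟨y, hyK, hyU⟩ := hK.2.2.1
  refine ih _ ?_ (h.snoc hK (mixedEdgeSet_of_snd_ne heK he'K hee')) ?_ rfl
  · rw [← hn, partialUnion_snoc_last]
    refine Finset.card_lt_card ⟨Finset.sdiff_subset_sdiff subset_rfl Finset.subset_union_left,
      fun hss => ?_⟩
    have := hss (Finset.mem_sdiff.2 ⟨((hM K).2 hK.1).1 hyK, hyU⟩)
    exact (Finset.mem_sdiff.1 this).2 (Finset.mem_union_right _ hyK)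
  · rw [partialUnion_snoc_last, Finset.coe_union]
    exact hconn.union_of_isCircuit hK.1 hK.2.1

end EarDecomposition

end DLGraph

/-- An M-connected mixed graph has an ear decomposition into mixed circuits. -/
theorem stmt2 {V : Type} [DecidableEq V] (G : DLGraph V)
    (hG : G.WellFormed) (hmix : G.Mixed) (hMC : G.MConnected) :
    ∃ (m : ℕ) (Cs : Fin m → Finset (Sym2 V × Bool)),
      G.IsEarDecomposition Cs ∧ ∀ i, DLGraph.MixedEdgeSet (Cs i) := by
  obtain ⟨p, hp⟩ := hMC.exists_generic
  have hM := fun C => DLGraph.isCircuit_iff_isCircuit_linearMatroid hG hp (C := C)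
  obtain ⟨C, hC, hCmix⟩ := hMC.exists_isCircuit_mixedEdgeSet hmix
  have hfirst : DLGraph.IsMixedEarPrefix (linearMatroid ℝ G.edges (DLGraph.edgeRow p)) ![C] :=
    ⟨le_rfl, fun i => by fin_cases i; exact ⟨(hM C).1 hC, hCmix⟩,
      fun i hi => by fin_cases i; simp at hi⟩
  have hunion : DLGraph.partialUnion ![C] 1 = C := by ext; simp [DLGraph.mem_partialUnion]
  refine hfirst.exists_isEarDecomposition hMC hM ?_
  rw [hunion]
  exact ((hM C).1 hC).circuitConnectedOn
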